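/- arXiv:1303.1060 — 7 statements merged into one kernel-verified Lean document; each statement's English description precedes it below -/
import Mathlib

section
/- For every r ≥ 0 one has the chain of inequalities λ_i(r)² ≥ r², H₁(r)² ≥ λ_i(r)², H_ε(r)² ≥ H₁(r)², and λ_e(r)² ≥ H_ε(r)². -/
/-!
With `s = r²` and `A = (1+ε)+(T+ε)s`, the numbers `λ_i²` and `λ_e²` are the two roots of
`p(μ) = εμ² - Aμ + (1+s)(1+Ts) - 1`, because `(A - 2εμ)² - v² = 4ε p(μ)`. So a number `μ` lies
between them as soon as `p(μ) ≤ 0`, and below both if `p(μ) ≥ 0` and `2εμ ≤ A`. Now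
`p(s) = (T-ε)s ≥ 0`, while `p(H₁²) = p(H_ε²) = -1`; the remaining inequality `H₁² ≤ H_ε²` is
`ε(1+s) ≤ 1+s ≤ 1+Ts`.
-/

open Real

/-- `u(r) = (1-ε)+(T-ε)r²`. -/
noncomputable def uu (ε T r : ℝ) : ℝ := (1 - ε) + (T - ε) * r ^ 2

/-- The ion dispersion relation `λ_i`. -/
noncomputable def lamI (ε T r : ℝ) : ℝ :=
  (Real.sqrt ε)⁻¹ *
    Real.sqrt (((1 + ε) + (T + ε) * r ^ 2 - Real.sqrt ((uu ε T r) ^ 2 + 4 * ε)) / 2)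

/-- The electron dispersion relation `λ_e`. -/
noncomputable def lamE (ε T r : ℝ) : ℝ :=
  (Real.sqrt ε)⁻¹ *
    Real.sqrt (((1 + ε) + (T + ε) * r ^ 2 + Real.sqrt ((uu ε T r) ^ 2 + 4 * ε)) / 2)

/-- `H₁(r) = √(1+r²)`. -/
noncomputable def H1 (r : ℝ) : ℝ := Real.sqrt (1 + r ^ 2)

/-- `H_ε(r) = ε^{-1/2}√(1+Tr²)`. -/
noncomputable def Heps (ε T r : ℝ) : ℝ := (Real.sqrt ε)⁻¹ * Real.sqrt (1 + T * r ^ 2)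

section HalfSqrt

variable {B D x : ℝ}

theorem le_half_sub_sqrt (hx : 2 * x ≤ B) (hD : D ≤ (B - 2 * x) ^ 2) : x ≤ (B - √D) / 2 := by
  have : √D ≤ B - 2 * x := Real.sqrt_le_iff.mpr ⟨by linarith, hD⟩
  linarith

theorem half_sub_sqrt_le (hD : (B - 2 * x) ^ 2 ≤ D) : (B - √D) / 2 ≤ x := by
  have := (abs_le.mp (Real.abs_le_sqrt hD)).2
  linarith

theorem le_half_add_sqrt (hD : (B - 2 * x) ^ 2 ≤ D) : x ≤ (B + √D) / 2 := by
  have := (abs_le.mp (Real.abs_le_sqrt hD)).1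
  linarith

end HalfSqrt

theorem inv_sqrt_mul_sqrt_sq {ε w : ℝ} (hε : 0 ≤ ε) (hw : 0 ≤ w) :
    ((√ε)⁻¹ * √w) ^ 2 = w / ε := by
  rw [mul_pow, inv_pow, Real.sq_sqrt hε, Real.sq_sqrt hw, inv_mul_eq_div]

/-- The dispersion polynomial in `μ = λ²`; its roots are `λ_i²` and `λ_e²`. -/
noncomputable def dispersionPoly (ε T r μ : ℝ) : ℝ :=
  ε * μ ^ 2 - ((1 + ε) + (T + ε) * r ^ 2) * μ + (1 + r ^ 2) * (1 + T * r ^ 2) - 1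

section Dispersion

variable {ε T r μ : ℝ}

theorem sq_sub_discr_eq (ε T r μ : ℝ) :
    ((1 + ε) + (T + ε) * r ^ 2 - 2 * (ε * μ)) ^ 2 - (uu ε T r ^ 2 + 4 * ε) =
      4 * ε * dispersionPoly ε T r μ := by
  unfold uu dispersionPoly
  ring

theorem dispersionPoly_zero_nonneg (hT : 0 ≤ T) : 0 ≤ dispersionPoly ε T r 0 := by
  unfold dispersionPoly
  have := sq_nonneg r
  nlinarith [mul_nonneg hT this, mul_nonneg (mul_nonneg hT this) this]

theorem lamI_radicand_nonneg (hε : 0 < ε) (hT : 0 ≤ T) :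
    0 ≤ ((1 + ε) + (T + ε) * r ^ 2 - √(uu ε T r ^ 2 + 4 * ε)) / 2 := by
  have hD := sq_sub_discr_eq ε T r 0
  have hp := dispersionPoly_zero_nonneg (ε := ε) (r := r) hT
  have := le_half_sub_sqrt (B := (1 + ε) + (T + ε) * r ^ 2) (D := uu ε T r ^ 2 + 4 * ε) (x := 0)
    (by nlinarith [sq_nonneg r]) (by nlinarith)
  simpa using this

theorem le_lamI_sq (hε : 0 < ε) (hT : 0 ≤ T) (hμ : 2 * (ε * μ) ≤ (1 + ε) + (T + ε) * r ^ 2)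
    (hp : 0 ≤ dispersionPoly ε T r μ) : μ ≤ lamI ε T r ^ 2 := by
  have hD := sq_sub_discr_eq ε T r μ
  have hεμ : ε * μ ≤ ((1 + ε) + (T + ε) * r ^ 2 - √(uu ε T r ^ 2 + 4 * ε)) / 2 :=
    le_half_sub_sqrt hμ (by nlinarith)
  rw [lamI, inv_sqrt_mul_sqrt_sq hε.le (lamI_radicand_nonneg hε hT), le_div_iff₀ hε]
  linarith

theorem lamI_sq_le (hε : 0 < ε) (hT : 0 ≤ T) (hp : dispersionPoly ε T r μ ≤ 0) :
    lamI ε T r ^ 2 ≤ μ := by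
  have hD := sq_sub_discr_eq ε T r μ
  have hεμ : ((1 + ε) + (T + ε) * r ^ 2 - √(uu ε T r ^ 2 + 4 * ε)) / 2 ≤ ε * μ :=
    half_sub_sqrt_le (by nlinarith)
  rw [lamI, inv_sqrt_mul_sqrt_sq hε.le (lamI_radicand_nonneg hε hT), div_le_iff₀ hε]
  linarith

theorem le_lamE_sq (hε : 0 < ε) (hT : 0 ≤ T) (hp : dispersionPoly ε T r μ ≤ 0) :
    μ ≤ lamE ε T r ^ 2 := by
  have hD := sq_sub_discr_eq ε T r μ
  have hεμ : ε * μ ≤ ((1 + ε) + (T + ε) * r ^ 2 + √(uu ε T r ^ 2 + 4 * ε)) / 2 :=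
    le_half_add_sqrt (by nlinarith)
  have hroot : 0 ≤ ((1 + ε) + (T + ε) * r ^ 2 + √(uu ε T r ^ 2 + 4 * ε)) / 2 := by
    have := Real.sqrt_nonneg (uu ε T r ^ 2 + 4 * ε)
    nlinarith [sq_nonneg r]
  rw [lamE, inv_sqrt_mul_sqrt_sq hε.le hroot, le_div_iff₀ hε]
  linarith

theorem dispersionPoly_sq (ε T r : ℝ) : dispersionPoly ε T r (r ^ 2) = (T - ε) * r ^ 2 := by
  unfold dispersionPoly
  ring

theorem H1_sq (r : ℝ) : H1 r ^ 2 = 1 + r ^ 2 :=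
  Real.sq_sqrt (by positivity)

theorem Heps_sq (hε : 0 ≤ ε) (hT : 0 ≤ T) : Heps ε T r ^ 2 = (1 + T * r ^ 2) / ε :=
  inv_sqrt_mul_sqrt_sq hε (by positivity)

theorem dispersionPoly_H1_sq (ε T r : ℝ) : dispersionPoly ε T r (H1 r ^ 2) = -1 := by
  rw [H1_sq, dispersionPoly]
  ring

theorem dispersionPoly_Heps_sq (hε : 0 < ε) (hT : 0 ≤ T) :
    dispersionPoly ε T r (Heps ε T r ^ 2) = -1 := by
  rw [Heps_sq hε.le hT, dispersionPoly]
  field_simp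
  ring

theorem H1_sq_le_Heps_sq (hε : 0 < ε) (hε₁ : ε ≤ 1) (hT : 1 ≤ T) :
    H1 r ^ 2 ≤ Heps ε T r ^ 2 := by
  rw [H1_sq, Heps_sq hε.le (by linarith), le_div_iff₀ hε]
  have := sq_nonneg r
  nlinarith

end Dispersion

theorem stmt0_general (ε T : ℝ) (hε : 0 < ε) (hε' : ε ≤ 1 / 1000) (hT : 1 ≤ T)
    (r : ℝ) :
    r ^ 2 ≤ (lamI ε T r) ^ 2 ∧ (lamI ε T r) ^ 2 ≤ (H1 r) ^ 2 ∧
      (H1 r) ^ 2 ≤ (Heps ε T r) ^ 2 ∧ (Heps ε T r) ^ 2 ≤ (lamE ε T r) ^ 2 := by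
  have hε₁ : ε ≤ 1 := by linarith
  have hT₀ : 0 ≤ T := by linarith
  have hs : 0 ≤ r ^ 2 := sq_nonneg r
  refine ⟨le_lamI_sq hε hT₀ (by nlinarith) ?_,
    lamI_sq_le hε hT₀ (by rw [dispersionPoly_H1_sq]; norm_num),
    H1_sq_le_Heps_sq hε hε₁ hT,
    le_lamE_sq hε hT₀ (by rw [dispersionPoly_Heps_sq hε hT₀]; norm_num)⟩
  rw [dispersionPoly_sq]
  exact mul_nonneg (by linarith) hs

/-- For every `r ≥ 0`: `λ_i(r)² ≥ r²`, `H₁(r)² ≥ λ_i(r)²`, `H_ε(r)² ≥ H₁(r)²`,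
and `λ_e(r)² ≥ H_ε(r)²`. -/
theorem stmt0 (ε T : ℝ) (hε : 0 < ε) (hε' : ε ≤ 1 / 1000) (hT : 1 ≤ T) (hT' : T ≤ 100)
    (r : ℝ) (hr : 0 ≤ r) :
    r ^ 2 ≤ (lamI ε T r) ^ 2 ∧ (lamI ε T r) ^ 2 ≤ (H1 r) ^ 2 ∧
      (H1 r) ^ 2 ≤ (Heps ε T r) ^ 2 ∧ (Heps ε T r) ^ 2 ≤ (lamE ε T r) ^ 2 :=
  stmt0_general ε T hε hε' hT r
end

section
/- For every r ≥ 0 one has r ≤ λ_i(r) ≤ r·√(1+T). -/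
/-!
Writing `A = (1+ε)+(T+ε)r²` and `v = √(u²+4ε)`, we have `λ_i² = (A - v)/(2ε)`, so both bounds
are linear bounds on `v`: the lower one is `v ≤ A - 2εr²` and the upper one is
`A - 2ε(1+T)r² ≤ v`. Squaring, each reduces to the sign of an explicit polynomial in `r²`,
which is settled by `ε ≤ T` and `ε(1+T) ≤ T` respectively.
-/

open Real

section DispersionBounds

variable {ε T r : ℝ}

lemma sqrt_uu_sq_add_le (hε : 0 ≤ ε) (hεT : ε ≤ T) :
    √(uu ε T r ^ 2 + 4 * ε) ≤ (1 + ε) + (T - ε) * r ^ 2 := by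
  have hs : 0 ≤ (T - ε) * r ^ 2 := mul_nonneg (by linarith) (sq_nonneg r)
  rw [Real.sqrt_le_iff, uu]
  -- `(u + 2ε)² - (u² + 4ε) = 4ε(T - ε)r²`
  constructor <;> nlinarith [mul_nonneg hε hs]

lemma le_sqrt_uu_sq_add (hε : 0 ≤ ε) (hT : 0 ≤ T) (hεT : ε * (1 + T) ≤ T) :
    (1 + ε) + (T + ε) * r ^ 2 - 2 * ε * (1 + T) * r ^ 2 ≤ √(uu ε T r ^ 2 + 4 * ε) := by
  refine (le_abs_self _).trans (Real.abs_le_sqrt ?_)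
  have hs := sq_nonneg r
  -- the difference of the two sides is `4ε r² (ε(1+T) + T(T - ε(1+T)) r²)`
  rw [uu]
  nlinarith [mul_nonneg (mul_nonneg (mul_nonneg hε hε) (by linarith : (0 : ℝ) ≤ 1 + T)) hs,
    mul_nonneg (mul_nonneg (mul_nonneg hε hT) (sub_nonneg.2 hεT)) (mul_nonneg hs hs)]

lemma lamI_eq_sqrt_div (hε : 0 ≤ ε) :
    lamI ε T r = √(((1 + ε) + (T + ε) * r ^ 2 - √(uu ε T r ^ 2 + 4 * ε)) / 2 / ε) := by
  rw [lamI, Real.sqrt_div' _ hε, inv_mul_eq_div]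

lemma le_lamI (hε : 0 < ε) (hεT : ε ≤ T) (hr : 0 ≤ r) : r ≤ lamI ε T r := by
  rw [lamI_eq_sqrt_div hε.le]
  refine (Real.sqrt_sq hr).symm.trans_le (Real.sqrt_le_sqrt ?_)
  rw [le_div_iff₀ hε]
  linarith [sqrt_uu_sq_add_le (r := r) hε.le hεT]

lemma lamI_le (hε : 0 < ε) (hT : 0 ≤ T) (hεT : ε * (1 + T) ≤ T) (hr : 0 ≤ r) :
    lamI ε T r ≤ r * √(1 + T) := by
  have hrhs : r * √(1 + T) = √(r ^ 2 * (1 + T)) := by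
    rw [Real.sqrt_mul (sq_nonneg r), Real.sqrt_sq hr]
  rw [lamI_eq_sqrt_div hε.le, hrhs]
  refine Real.sqrt_le_sqrt ?_
  rw [div_le_iff₀ hε]
  linarith [le_sqrt_uu_sq_add (r := r) hε.le hT hεT]

end DispersionBounds

theorem stmt4_general (ε T : ℝ) (hε : 0 < ε) (hε' : ε ≤ 1 / 1000) (hT : 1 ≤ T)
    (r : ℝ) (hr : 0 ≤ r) :
    r ≤ lamI ε T r ∧ lamI ε T r ≤ r * Real.sqrt (1 + T) := by
  have hεT : ε * (1 + T) ≤ T := by nlinarith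
  exact ⟨le_lamI hε (by linarith) hr, lamI_le hε (by linarith) hεT hr⟩

/-- For every `r ≥ 0` one has `r ≤ λ_i(r) ≤ r√(1+T)`. -/
theorem stmt4 (ε T : ℝ) (hε : 0 < ε) (hε' : ε ≤ 1 / 1000) (hT : 1 ≤ T) (hT' : T ≤ 100)
    (r : ℝ) (hr : 0 ≤ r) :
    r ≤ lamI ε T r ∧ lamI ε T r ≤ r * Real.sqrt (1 + T) :=
  stmt4_general ε T hε hε' hT r hr
end

section
/- Define q_i(r) = λ_i(r)/r for r > 0. Then for every r > 0 the derivative q_i'(r) exists and satisfies q_i'(r) ≤ −(1/2)·T²·r/(1+T+T r²)²; in particular q_i is strictly decreasing on (0,∞). -/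
open Real

/-!
By the identity `√ε λ_e λ_i = r √W`, with `W = 1 + T + T r²`, one has `q_i = √f` for
`f = 2W / D`, where `D = 2ε λ_e² = (1 + ε) + (T + ε) r² + v`. Since `v ≤ u + 2T` we get `D ≤ 2W`,
so `f ≥ 1` and `q_i' = f' / (2√f) ≤ f' / (2f)`. The logarithmic derivative is
`f' / f = 2rK / (vDW)` with `K = 4εT - (T² + ε) v - (T² - ε) u`, and `K ≤ -T² v` because `u ≤ v`
and `Tu ≥ 4ε`. Hence `q_i' ≤ -T² r / (DW) ≤ -T² r / (2W²)`.
-/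

noncomputable def vv (ε T r : ℝ) : ℝ := √(uu ε T r ^ 2 + 4 * ε)

noncomputable def DD (ε T r : ℝ) : ℝ := (1 + ε) + (T + ε) * r ^ 2 + vv ε T r

section

variable {ε T : ℝ}

lemma one_sub_le_uu (hεT : ε ≤ T) (r : ℝ) : 1 - ε ≤ uu ε T r := by
  unfold uu; nlinarith [sq_nonneg r]

lemma vv_sq (hε : 0 ≤ ε) (r : ℝ) : vv ε T r ^ 2 = uu ε T r ^ 2 + 4 * ε :=
  sq_sqrt (by positivity)

lemma vv_pos (hε : 0 < ε) (r : ℝ) : 0 < vv ε T r :=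
  sqrt_pos.2 (by positivity)

lemma uu_le_vv (hε : 0 ≤ ε) (r : ℝ) : uu ε T r ≤ vv ε T r :=
  le_sqrt_of_sq_le (by linarith)

lemma DD_pos (hε : 0 < ε) (hT : 0 ≤ T) (r : ℝ) : 0 < DD ε T r := by
  have := vv_pos (T := T) hε r
  unfold DD; positivity

lemma DD_le_two_mul (hT : 0 ≤ T) (hεT : ε ≤ T ^ 2) {r : ℝ} (hu : 0 ≤ uu ε T r) :
    DD ε T r ≤ 2 * (1 + T + T * r ^ 2) := by
  have hv : vv ε T r ≤ uu ε T r + 2 * T :=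
    (sqrt_le_left (by positivity)).2 (by nlinarith)
  unfold DD; unfold uu at hv; linarith

lemma sq_sub_vv_sq (hε : 0 ≤ ε) (r : ℝ) :
    ((1 + ε) + (T + ε) * r ^ 2) ^ 2 - vv ε T r ^ 2 = 4 * ε * r ^ 2 * (1 + T + T * r ^ 2) := by
  rw [vv_sq hε]; unfold uu; ring

theorem lamI_div_self_eq_sqrt (hε : 0 < ε) (hT : 0 ≤ T) {r : ℝ} (hr : 0 < r) :
    lamI ε T r / r = √(2 * (1 + T + T * r ^ 2) / DD ε T r) := by
  have hD := DD_pos hε hT r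
  have hA := sq_sub_vv_sq (T := T) hε.le r
  have hsqrt : √ε * r = √(ε * r ^ 2) := by rw [sqrt_mul hε.le, sqrt_sq hr.le]
  rw [lamI, ← vv, inv_mul_eq_div, div_div, hsqrt, ← sqrt_div' _ (by positivity)]
  congr 1
  unfold DD at hD ⊢
  field_simp
  linear_combination hA

lemma hasDerivAt_uu (r : ℝ) : HasDerivAt (uu ε T) (2 * (T - ε) * r) r := by
  refine (((hasDerivAt_pow 2 r).const_mul (T - ε)).const_add (1 - ε)).congr_deriv ?_
  push_cast; ring

lemma hasDerivAt_vv (hε : 0 < ε) (r : ℝ) :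
    HasDerivAt (vv ε T) (uu ε T r * (2 * (T - ε) * r) / vv ε T r) r := by
  refine ((((hasDerivAt_uu r).fun_pow 2).add_const (4 * ε)).sqrt (by positivity)).congr_deriv ?_
  rw [← vv]; push_cast; field_simp

lemma hasDerivAt_DD (hε : 0 < ε) (r : ℝ) :
    HasDerivAt (DD ε T)
      (2 * (T + ε) * r + uu ε T r * (2 * (T - ε) * r) / vv ε T r) r := by
  refine ((((hasDerivAt_pow 2 r).const_mul (T + ε)).const_add (1 + ε)).add
    (hasDerivAt_vv hε r)).congr_deriv ?_
  push_cast; ring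

theorem hasDerivAt_two_mul_div_DD (hε : 0 < ε) (hT : 0 ≤ T) (r : ℝ) :
    HasDerivAt (fun s => 2 * (1 + T + T * s ^ 2) / DD ε T s)
      (4 * r * (4 * ε * T - (T ^ 2 + ε) * vv ε T r - (T ^ 2 - ε) * uu ε T r) /
        (vv ε T r * DD ε T r ^ 2)) r := by
  have hv := vv_pos (T := T) hε r
  have hD := DD_pos hε hT r
  refine (((((hasDerivAt_pow 2 r).const_mul T).const_add (1 + T)).const_mul 2).div
    (hasDerivAt_DD hε r) hD.ne').congr_deriv ?_
  have hv2 := vv_sq (T := T) hε.le r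
  unfold DD at hD ⊢
  unfold uu at hv2 ⊢
  field_simp
  linear_combination (4 * T * r) * hv2

lemma sq_mul_vv_le (hε : 0 ≤ ε) (hT : 0 ≤ T) {r : ℝ} (hTu : 4 * ε ≤ T * uu ε T r) :
    T ^ 2 * vv ε T r ≤ (T ^ 2 + ε) * vv ε T r + (T ^ 2 - ε) * uu ε T r - 4 * ε * T := by
  have huv := uu_le_vv (T := T) hε r
  nlinarith [mul_nonneg hT (sub_nonneg.2 hTu), mul_nonneg hε (sub_nonneg.2 huv)]

lemma div_two_mul_sqrt_le {a y : ℝ} (ha : a ≤ 0) (hy : 1 ≤ y) :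
    a / (2 * √y) ≤ a / (2 * y) := by
  have hsqrt : 0 < √y := sqrt_pos.2 (by linarith)
  have hle : √y ≤ y := sqrt_le_self_iff.2 (Or.inr hy)
  rw [div_le_div_iff₀ (by positivity) (by positivity)]
  nlinarith

theorem exists_hasDerivAt_lamI_div_self_le (hε : 0 < ε) (hε5 : 5 * ε ≤ 1) (hT : 1 ≤ T)
    {r : ℝ} (hr : 0 < r) :
    ∃ d, HasDerivAt (fun s => lamI ε T s / s) d r ∧
      d ≤ -(1 / 2) * T ^ 2 * r / (1 + T + T * r ^ 2) ^ 2 := by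
  have hu : 1 - ε ≤ uu ε T r := one_sub_le_uu (by linarith) r
  have hv := vv_pos (T := T) hε r
  have hD := DD_pos (T := T) hε (by linarith) r
  have hDW := DD_le_two_mul (by linarith) (by nlinarith) (by linarith : 0 ≤ uu ε T r)
  have hK := sq_mul_vv_le hε.le (by linarith) (by nlinarith : 4 * ε ≤ T * uu ε T r)
  have heq : (fun s => lamI ε T s / s) =ᶠ[nhds r]
      fun s => √(2 * (1 + T + T * s ^ 2) / DD ε T s) :=
    Filter.eventually_of_mem (Ioi_mem_nhds hr) fun _ hs =>
      lamI_div_self_eq_sqrt hε (by linarith) hs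
  refine ⟨_, ((hasDerivAt_two_mul_div_DD hε (by linarith) r).sqrt
    (by positivity)).congr_of_eventuallyEq heq, ?_⟩
  set W := 1 + T + T * r ^ 2
  set D := DD ε T r
  set K := 4 * ε * T - (T ^ 2 + ε) * vv ε T r - (T ^ 2 - ε) * uu ε T r
  have hKv : K ≤ -(T ^ 2 * vv ε T r) := by linarith
  have hW : 0 < W := by positivity
  have hK0 : K ≤ 0 := hKv.trans (by simp only [neg_nonpos]; positivity)
  refine (div_two_mul_sqrt_le ?_ ((one_le_div hD).2 hDW)).trans ?_
  · exact div_nonpos_of_nonpos_of_nonneg (mul_nonpos_of_nonneg_of_nonpos (by positivity) hK0)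
      (by positivity)
  calc 4 * r * K / (vv ε T r * D ^ 2) / (2 * (2 * W / D)) = r * K / (vv ε T r * D * W) := by
        field_simp; ring
    _ ≤ -(1 / 2) * T ^ 2 * r / W ^ 2 := by
      rw [div_le_div_iff₀ (by positivity) (by positivity)]
      have hKW := mul_le_mul_of_nonneg_left (mul_le_mul_of_nonneg_right hKv hW.le)
        (by positivity : 0 ≤ r * W)
      have hvD := mul_le_mul_of_nonneg_left hDW (by positivity : 0 ≤ r * W * T ^ 2 * vv ε T r)
      nlinarith

theorem strictAntiOn_of_exists_hasDerivAt_neg {D : Set ℝ} (hD : Convex ℝ D) (hDo : IsOpen D)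
    {f : ℝ → ℝ} (hf : ∀ x ∈ D, ∃ d, HasDerivAt f d x ∧ d < 0) : StrictAntiOn f D := by
  refine strictAntiOn_of_deriv_neg hD (fun x hx => ?_) (fun x hx => ?_)
  · obtain ⟨d, hd, -⟩ := hf x hx
    exact hd.continuousAt.continuousWithinAt
  · rw [hDo.interior_eq] at hx
    obtain ⟨d, hd, hneg⟩ := hf x hx
    rwa [hd.deriv]

end

theorem stmt5_general (ε T : ℝ) (hε : 0 < ε) (hε' : ε ≤ 1 / 1000) (hT : 1 ≤ T) :
    (∀ r : ℝ, 0 < r → ∃ d : ℝ, HasDerivAt (fun s => lamI ε T s / s) d r ∧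
      d ≤ -(1 / 2) * T ^ 2 * r / (1 + T + T * r ^ 2) ^ 2) ∧
    StrictAntiOn (fun s => lamI ε T s / s) (Set.Ioi 0) := by
  have hderiv : ∀ r : ℝ, 0 < r → ∃ d : ℝ, HasDerivAt (fun s => lamI ε T s / s) d r ∧
      d ≤ -(1 / 2) * T ^ 2 * r / (1 + T + T * r ^ 2) ^ 2 :=
    fun r hr => exists_hasDerivAt_lamI_div_self_le hε (by linarith) hT hr
  refine ⟨hderiv, strictAntiOn_of_exists_hasDerivAt_neg (convex_Ioi 0) isOpen_Ioi ?_⟩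
  intro r hr
  obtain ⟨d, hd, hle⟩ := hderiv r hr
  have hr' : 0 < r := hr
  refine ⟨d, hd, hle.trans_lt (div_neg_of_neg_of_pos ?_ (by positivity))⟩
  have : 0 < T ^ 2 * r := by positivity
  linarith

/-- With `q_i(r) = λ_i(r)/r` for `r > 0`, the derivative `q_i'(r)` exists and satisfies
`q_i'(r) ≤ −(1/2)T²r/(1+T+Tr²)²`; in particular `q_i` is strictly decreasing on `(0,∞)`. -/
theorem stmt5 (ε T : ℝ) (hε : 0 < ε) (hε' : ε ≤ 1 / 1000) (hT : 1 ≤ T) (hT' : T ≤ 100) :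
    (∀ r : ℝ, 0 < r → ∃ d : ℝ, HasDerivAt (fun s => lamI ε T s / s) d r ∧
      d ≤ -(1 / 2) * T ^ 2 * r / (1 + T + T * r ^ 2) ^ 2) ∧
    StrictAntiOn (fun s => lamI ε T s / s) (Set.Ioi 0) :=
  stmt5_general ε T hε hε' hT
end

section
/- The function λ_i is subadditive: λ_i(a+b) ≤ λ_i(a) + λ_i(b) for all a, b ≥ 0. Moreover, quantitatively, for all 0 ≤ a ≤ b one has λ_i(a) + λ_i(b) − λ_i(a+b) ≥ T²·a·b² / (2·(1+T+T·(a+b)²)²). -/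
/-!
With `A = (1 + ε) + (T + ε) r²` one has `(A - v)(A + v) = A² - u² - 4ε = 4ε r² (1 + T + T r²)`,
so `λ_i(r) = r q(r²)` where `q(s) = √(2N(s) / D(s))`, `N(s) = 1 + T + T s`, `D = A + v`, and `q`
involves no cancellation. If `g` is antitone on `[0, ∞)`, then `r ↦ r g(r)` is subadditive and
its defect at `(a, b)` is at least `b (g(b) - g(a + b))`. It remains to show that `q` decreases
quantitatively: `q(s)² - q(t)² = 2 (N(s) D(t) - N(t) D(s)) / (D(s) D(t))`, where the numerator
is at least `2T² (t - s)` (at `ε = 0` it is `4T² (t - s)`) and `D ≤ 2N` controls the denominator.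
-/
open Real

open Set

lemma add_mul_le_of_antitoneOn {g : ℝ → ℝ} (hg : AntitoneOn g (Ici 0)) {a b : ℝ}
    (ha : 0 ≤ a) (hb : 0 ≤ b) : (a + b) * g (a + b) ≤ a * g a + b * g b := by
  have hab : 0 ≤ a + b := add_nonneg ha hb
  have hga : g (a + b) ≤ g a := hg ha hab (le_add_of_nonneg_right hb)
  have hgb : g (a + b) ≤ g b := hg hb hab (le_add_of_nonneg_left ha)
  linear_combination mul_le_mul_of_nonneg_left hga ha + mul_le_mul_of_nonneg_left hgb hb

namespace IonDispersion

-- Functions of `s = r²`: `q ε T (r ^ 2)` is the paper's `q_i(r)`.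

def u (ε T s : ℝ) : ℝ := (1 - ε) + (T - ε) * s

noncomputable def v (ε T s : ℝ) : ℝ := √(u ε T s ^ 2 + 4 * ε)

def N (T s : ℝ) : ℝ := 1 + T + T * s

noncomputable def D (ε T s : ℝ) : ℝ := (1 + ε) + (T + ε) * s + v ε T s

noncomputable def q (ε T s : ℝ) : ℝ := √(2 * N T s / D ε T s)

variable {ε T s t : ℝ}

lemma one_sub_le_u (hεT : ε ≤ T) (hs : 0 ≤ s) : 1 - ε ≤ u ε T s := by
  unfold u
  nlinarith

lemma v_sq (hε : 0 ≤ ε) : v ε T s ^ 2 = u ε T s ^ 2 + 4 * ε :=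
  Real.sq_sqrt (by positivity)

lemma u_le_v (hε : 0 ≤ ε) : u ε T s ≤ v ε T s :=
  (le_abs_self _).trans (Real.abs_le_sqrt (by linarith))

lemma v_le_u_add (hε : 0 ≤ ε) (hu : 2 / 3 ≤ u ε T s) : v ε T s ≤ u ε T s + 3 * ε :=
  Real.sqrt_le_iff.2 ⟨by linarith, by nlinarith⟩

lemma N_pos (hT : 0 ≤ T) (hs : 0 ≤ s) : 0 < N T s := by
  unfold N
  positivity

lemma two_mul_le_D (hε : 0 ≤ ε) : 2 * (1 + T * s) ≤ D ε T s := by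
  have := u_le_v (T := T) (s := s) hε
  unfold D
  unfold u at this
  linarith

lemma D_pos (hε : 0 ≤ ε) (hT : 0 ≤ T) (hs : 0 ≤ s) : 0 < D ε T s := by
  have := two_mul_le_D (T := T) (s := s) hε
  nlinarith

lemma D_le_two_mul_N (hε : 0 < ε) (hε' : ε ≤ 1 / 1000) (hT : 1 ≤ T) (hs : 0 ≤ s) :
    D ε T s ≤ 2 * N T s := by
  have hu := one_sub_le_u (by linarith : ε ≤ T) hs
  have := v_le_u_add hε.le (by linarith : 2 / 3 ≤ u ε T s)
  unfold D N
  unfold u at this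
  linarith

/-- Multiplying by `v t + v s` rationalises `v t - v s`; what is left beyond `T² (t - s)` is then
nonnegative because `u ≤ v ≤ u + 3ε`. -/
lemma le_N_mul_D_sub_N_mul_D (hε : 0 < ε) (hε' : ε ≤ 1 / 1000) (hT : 1 ≤ T) (hs : 0 ≤ s)
    (hst : s ≤ t) : T ^ 2 * (t - s) ≤ N T s * D ε T t - N T t * D ε T s := by
  have hus := one_sub_le_u (by linarith : ε ≤ T) hs
  have hut := one_sub_le_u (by linarith : ε ≤ T) (hs.trans hst)
  have hvs := v_le_u_add hε.le (by linarith : 2 / 3 ≤ u ε T s)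
  have hvt := v_le_u_add hε.le (by linarith : 2 / 3 ≤ u ε T t)
  have hvs' := u_le_v (T := T) (s := s) hε.le
  have hvt' := u_le_v (T := T) (s := t) hε.le
  set P := v ε T t + v ε T s
  set U := u ε T t + u ε T s
  have hP : 0 < P := by linarith
  have hU : 2 * u ε T s ≤ U := by
    have : (T - ε) * s ≤ (T - ε) * t := mul_le_mul_of_nonneg_left hst (by linarith)
    simp only [U, u]
    linarith
  have hpoly : (U + 6 * ε) * (T * (u ε T s + 3 * ε) - ε) ≤ N T s * (T - ε) * U := by
    have h1 : 0 ≤ (U - 2 * u ε T s) * (T * (T - 3 * ε)) :=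
      mul_nonneg (by linarith) (by nlinarith)
    have h2 : 18 * ε ^ 2 * T ≤ u ε T s * T * (2 * T - 12 * ε) := by
      have h18 : 18 * ε ^ 2 * T ≤ 1 * T := mul_le_mul_of_nonneg_right (by nlinarith) (by linarith)
      have hTu : 1 * T ≤ u ε T s * (2 * T - 12 * ε) * T :=
        mul_le_mul_of_nonneg_right (by nlinarith) (by linarith)
      linear_combination h18 + hTu
    have hNu : N T s * (T - ε) = T * u ε T s + 3 * ε * T - ε + (T ^ 2 - 3 * ε * T) := by
      unfold N u
      ring
    rw [hNu]
    linear_combination h1 + h2 + 6 * sq_nonneg ε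
  have hbracket : 0 ≤ ε * P + N T s * (T - ε) * U - T * v ε T s * P := by
    have : P * (T * v ε T s - ε) ≤ (U + 6 * ε) * (T * (u ε T s + 3 * ε) - ε) :=
      mul_le_mul (by linarith) (by nlinarith) (by nlinarith) (by linarith)
    linarith
  have hid : (N T s * D ε T t - N T t * D ε T s - T ^ 2 * (t - s)) * P
      = (t - s) * (ε * P + N T s * (T - ε) * U - T * v ε T s * P) := by
    have hvt2 := v_sq (T := T) (s := t) hε.le
    have hvs2 := v_sq (T := T) (s := s) hε.le
    simp only [P, U, D, N]
    unfold u at hvt2 hvs2 ⊢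
    linear_combination (1 + T + T * s) * hvt2 + (T * (t - s) - (1 + T + T * t)) * hvs2
  have : 0 ≤ (N T s * D ε T t - N T t * D ε T s - T ^ 2 * (t - s)) * P := by
    rw [hid]
    exact mul_nonneg (by linarith) hbracket
  linarith [nonneg_of_mul_nonneg_left this hP]

lemma sq_q_mul_D (hε : 0 ≤ ε) (hT : 0 ≤ T) (hs : 0 ≤ s) : q ε T s ^ 2 * D ε T s = 2 * N T s := by
  have hD := D_pos hε hT hs
  rw [q, Real.sq_sqrt (div_nonneg (by linarith [N_pos hT hs]) hD.le)]
  field_simp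

lemma q_pos (hε : 0 ≤ ε) (hT : 0 ≤ T) (hs : 0 ≤ s) : 0 < q ε T s :=
  Real.sqrt_pos.2 (div_pos (by linarith [N_pos hT hs]) (D_pos hε hT hs))

lemma q_mul_D_le (hε : 0 < ε) (hε' : ε ≤ 1 / 1000) (hT : 1 ≤ T) (hs : 0 ≤ s) :
    q ε T s * D ε T s ≤ 2 * N T s := by
  have hT0 : 0 ≤ T := by linarith
  have hq := q_pos hε.le hT0 hs
  have hD := D_pos hε.le hT0 hs
  have hN := N_pos hT0 hs
  refine (sq_le_sq₀ (by positivity) (by positivity)).1 ?_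
  calc (q ε T s * D ε T s) ^ 2 = q ε T s ^ 2 * D ε T s * D ε T s := by ring
    _ = 2 * N T s * D ε T s := by rw [sq_q_mul_D hε.le hT0 hs]
    _ ≤ 2 * N T s * (2 * N T s) :=
        mul_le_mul_of_nonneg_left (D_le_two_mul_N hε hε' hT hs) (by positivity)
    _ = (2 * N T s) ^ 2 := by ring

lemma le_q_sub_q (hε : 0 < ε) (hε' : ε ≤ 1 / 1000) (hT : 1 ≤ T) (hs : 0 ≤ s) (hst : s ≤ t) :
    T ^ 2 * (t - s) / (4 * N T t ^ 2) ≤ q ε T s - q ε T t := by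
  have hT0 : 0 ≤ T := by linarith
  have ht := hs.trans hst
  have hcross := le_N_mul_D_sub_N_mul_D hε hε' hT hs hst
  have hqs := q_pos hε.le hT0 hs
  have hqt := q_pos hε.le hT0 ht
  have hDs := D_pos hε.le hT0 hs
  have hDt := D_pos hε.le hT0 ht
  have hNs := N_pos hT0 hs
  have hNt := N_pos hT0 ht
  have hNst : N T s ≤ N T t := by
    unfold N
    nlinarith
  set M := (q ε T s + q ε T t) * (D ε T s * D ε T t)
  have hM : 0 < M := by positivity
  have hid : (q ε T s - q ε T t) * M = 2 * (N T s * D ε T t - N T t * D ε T s) := by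
    linear_combination D ε T t * sq_q_mul_D hε.le hT0 hs - D ε T s * sq_q_mul_D hε.le hT0 ht
  have hdec : 0 ≤ q ε T s - q ε T t :=
    nonneg_of_mul_nonneg_left (by nlinarith) hM
  have hMle : M ≤ 8 * N T t ^ 2 := by
    calc M = q ε T s * D ε T s * D ε T t + q ε T t * D ε T t * D ε T s := by ring
      _ ≤ 2 * N T s * (2 * N T t) + 2 * N T t * (2 * N T s) :=
          add_le_add
            (mul_le_mul (q_mul_D_le hε hε' hT hs) (D_le_two_mul_N hε hε' hT ht) hDt.le
              (by positivity))
            (mul_le_mul (q_mul_D_le hε hε' hT ht) (D_le_two_mul_N hε hε' hT hs) hDs.le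
              (by positivity))
      _ ≤ 8 * N T t ^ 2 := by nlinarith
  rw [div_le_iff₀ (by positivity)]
  nlinarith [mul_le_mul_of_nonneg_left hMle hdec]

lemma lamI_eq_mul_q (hε : 0 < ε) (hT : 0 ≤ T) {r : ℝ} (hr : 0 ≤ r) :
    lamI ε T r = r * q ε T (r ^ 2) := by
  have hD := D_pos hε.le hT (sq_nonneg r)
  have hv := v_sq (T := T) (s := r ^ 2) hε.le
  have hrad : ((1 + ε) + (T + ε) * r ^ 2 - v ε T (r ^ 2)) / 2
      = ε * (r ^ 2 * (2 * N T (r ^ 2) / D ε T (r ^ 2))) := by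
    field_simp
    unfold D N
    unfold u at hv
    linear_combination (-1 : ℝ) * hv
  calc lamI ε T r = (√ε)⁻¹ * √(((1 + ε) + (T + ε) * r ^ 2 - v ε T (r ^ 2)) / 2) := rfl
    _ = r * q ε T (r ^ 2) := by
      rw [hrad, Real.sqrt_mul hε.le, Real.sqrt_mul (sq_nonneg r), Real.sqrt_sq hr,
        inv_mul_cancel_left₀ (by positivity)]
      rfl

end IonDispersion

open IonDispersion

theorem stmt6_general (ε T : ℝ) (hε : 0 < ε) (hε' : ε ≤ 1 / 1000) (hT : 1 ≤ T) :
    (∀ a b : ℝ, 0 ≤ a → 0 ≤ b → lamI ε T (a + b) ≤ lamI ε T a + lamI ε T b) ∧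
    (∀ a b : ℝ, 0 ≤ a → a ≤ b →
      T ^ 2 * a * b ^ 2 / (2 * (1 + T + T * (a + b) ^ 2) ^ 2) ≤
        lamI ε T a + lamI ε T b - lamI ε T (a + b)) := by
  set g : ℝ → ℝ := fun r => q ε T (r ^ 2)
  have hlam : ∀ {r}, 0 ≤ r → lamI ε T r = r * g r := lamI_eq_mul_q hε (by linarith)
  have hdec : ∀ {x y : ℝ}, 0 ≤ x → x ≤ y →
      T ^ 2 * (y ^ 2 - x ^ 2) / (4 * (1 + T + T * y ^ 2) ^ 2) ≤ g x - g y :=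
    fun hx hxy => le_q_sub_q hε hε' hT (sq_nonneg _) (pow_le_pow_left₀ hx hxy 2)
  have hg : AntitoneOn g (Ici 0) := fun x hx y _ hxy =>
    sub_nonneg.1 ((div_nonneg (mul_nonneg (sq_nonneg T) (by nlinarith [mem_Ici.1 hx]))
      (by positivity)).trans (hdec hx hxy))
  refine ⟨fun a b ha hb => ?_, fun a b ha hab => ?_⟩
  · rw [hlam ha, hlam hb, hlam (add_nonneg ha hb)]
    exact add_mul_le_of_antitoneOn hg ha hb
  · have hb := ha.trans hab
    rw [hlam ha, hlam hb, hlam (add_nonneg ha hb)]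
    have hA : 0 ≤ g a - g (a + b) :=
      sub_nonneg.2 (hg ha (add_nonneg ha hb) (le_add_of_nonneg_right hb))
    have hB := hdec hb (le_add_of_nonneg_left ha)
    generalize 1 + T + T * (a + b) ^ 2 = K at hB ⊢
    calc T ^ 2 * a * b ^ 2 / (2 * K ^ 2)
        ≤ T ^ 2 * a * b ^ 2 / (2 * K ^ 2) + T ^ 2 * a ^ 2 * b / (4 * K ^ 2) :=
          le_add_of_nonneg_right (by positivity)
      _ = b * (T ^ 2 * ((a + b) ^ 2 - b ^ 2) / (4 * K ^ 2)) := by ring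
      _ ≤ b * (g b - g (a + b)) := mul_le_mul_of_nonneg_left hB hb
      _ ≤ a * g a + b * g b - (a + b) * g (a + b) := by
        linear_combination mul_nonneg ha hA

/-- `λ_i` is subadditive, and quantitatively for `0 ≤ a ≤ b`:
`λ_i(a)+λ_i(b)−λ_i(a+b) ≥ T²ab²/(2(1+T+T(a+b)²)²)`. -/
theorem stmt6 (ε T : ℝ) (hε : 0 < ε) (hε' : ε ≤ 1 / 1000) (hT : 1 ≤ T) (hT' : T ≤ 100) :
    (∀ a b : ℝ, 0 ≤ a → 0 ≤ b → lamI ε T (a + b) ≤ lamI ε T a + lamI ε T b) ∧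
    (∀ a b : ℝ, 0 ≤ a → a ≤ b →
      T ^ 2 * a * b ^ 2 / (2 * (1 + T + T * (a + b) ^ 2) ^ 2) ≤
        lamI ε T a + lamI ε T b - lamI ε T (a + b)) :=
  stmt6_general ε T hε hε' hT
end

section
/- For all real numbers a, b with 0 ≤ a ≤ b one has λ_b(a) + λ_b(b) − λ_b(a+b) ≥ (1+ε) / (2·ε·λ_b(a)). -/
/-!
Factor out `ε^{-1/2}` and put `s = 1 + ε`, `x = √C_b a`, `y = √C_b b`, `p = √(s + x²)`,
`q = √(s + y²)`, `t = s / (2p)`. The claim becomes `√(s + (x + y)²) ≤ p + q - t`, and since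
`p² + q² = 2s + x² + y²` and `2pt = s`, squaring reduces it to `xy ≤ (p - t) q`. This follows from
`y ≤ q` and `x ≤ p - t`, the latter because `p - t - x = (p - x)² / (2p)`.
-/

open Real

/-- The magnetic dispersion relation `λ_b(r) = ε^{-1/2}√(1+ε+C_b r²)`. -/
noncomputable def lamB (ε Cb r : ℝ) : ℝ := (Real.sqrt ε)⁻¹ * Real.sqrt (1 + ε + Cb * r ^ 2)

theorem sqrt_add_sq_add_div_le {s x y : ℝ} (hs : 0 < s) (hy : 0 ≤ y) :
    √(s + (x + y) ^ 2) + s / (2 * √(s + x ^ 2)) ≤ √(s + x ^ 2) + √(s + y ^ 2) := by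
  set p := √(s + x ^ 2)
  set q := √(s + y ^ 2)
  set t := s / (2 * p) with ht
  have hp : 0 < p := sqrt_pos.mpr (by positivity)
  have hp2 : p ^ 2 = s + x ^ 2 := sq_sqrt (by positivity)
  have hq2 : q ^ 2 = s + y ^ 2 := sq_sqrt (by positivity)
  have hyq : y ≤ q := le_sqrt_of_sq_le (by linarith)
  have hpt : 2 * p * t = s := by rw [ht]; field_simp
  have hxt : x ≤ p - t := by nlinarith [sq_nonneg (p - x)]
  have htp : t ≤ p := by nlinarith
  have hxy : x * y ≤ (p - t) * q := by
    nlinarith [mul_nonneg (sub_nonneg.2 htp) (sub_nonneg.2 hyq), mul_nonneg hy (sub_nonneg.2 hxt)]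
  rw [← le_sub_iff_add_le, sqrt_le_left (by linarith [sqrt_nonneg (s + y ^ 2)])]
  nlinarith

theorem lamB_eq_of_nonneg {ε Cb : ℝ} (hCb : 0 ≤ Cb) (r : ℝ) :
    lamB ε Cb r = (√ε)⁻¹ * √(1 + ε + (√Cb * r) ^ 2) := by
  rw [lamB, mul_pow, sq_sqrt hCb]

theorem stmt7_general (ε T Cb : ℝ) (hε : 0 < ε) (hT : 1 ≤ T)
    (hCb : 6 * T ≤ Cb) (a b : ℝ) (ha : 0 ≤ a) (hab : a ≤ b) :
    (1 + ε) / (2 * ε * lamB ε Cb a) ≤ lamB ε Cb a + lamB ε Cb b - lamB ε Cb (a + b) := by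
  have hCb₀ : 0 ≤ Cb := by linarith
  have key := sqrt_add_sq_add_div_le (s := 1 + ε) (x := √Cb * a) (by linarith)
    (mul_nonneg (sqrt_nonneg Cb) (ha.trans hab))
  simp only [lamB_eq_of_nonneg hCb₀, mul_add]
  calc (1 + ε) / (2 * ε * ((√ε)⁻¹ * √(1 + ε + (√Cb * a) ^ 2)))
      = (√ε)⁻¹ * ((1 + ε) / (2 * √(1 + ε + (√Cb * a) ^ 2))) := by
        field_simp
        exact sq_sqrt hε.le
    _ ≤ (√ε)⁻¹ * (√(1 + ε + (√Cb * a) ^ 2) + √(1 + ε + (√Cb * b) ^ 2)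
          - √(1 + ε + (√Cb * a + √Cb * b) ^ 2)) := by gcongr; linarith
    _ = _ := by ring

/-- For `0 ≤ a ≤ b`: `λ_b(a)+λ_b(b)−λ_b(a+b) ≥ (1+ε)/(2ελ_b(a))`. -/
theorem stmt7 (ε T Cb : ℝ) (hε : 0 < ε) (hε' : ε ≤ 1 / 1000) (hT : 1 ≤ T) (hT' : T ≤ 100)
    (hCb : 6 * T ≤ Cb) (a b : ℝ) (ha : 0 ≤ a) (hab : a ≤ b) :
    (1 + ε) / (2 * ε * lamB ε Cb a) ≤ lamB ε Cb a + lamB ε Cb b - lamB ε Cb (a + b) :=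
  stmt7_general ε T Cb hε hT hCb a b ha hab
end

section
/- For every r ≥ 0 one has H_ε(r) ≤ λ_e(r) and λ_e(r) − H_ε(r) ≤ 1/(2·u(r)·H_ε(r)), where u(r) = (1−ε)+(T−ε)r² (which is strictly positive under the assumptions on ε and T). -/
open Real

/-!
Since `(1+ε)+(T+ε)r² = 2(1+Tr²) - u`, one has `ε λ_e² = (1+Tr²) + (v-u)/2 = ε H_ε² + (v-u)/2`
with `v = √(u²+4ε) ≥ u`. This gives `H_ε ≤ λ_e`, and `(v-u)² ≥ 0` together with `v² = u²+4ε`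
gives `u(v-u) ≤ 2ε`, i.e. `λ_e² - H_ε² ≤ 1/u`. Dividing by `λ_e + H_ε ≥ 2H_ε` gives the bound.
-/

theorem self_le_sqrt_sq_add (u : ℝ) {c : ℝ} (hc : 0 ≤ c) : u ≤ √(u ^ 2 + c) :=
  (le_abs_self u).trans (Real.abs_le_sqrt (by linarith))

theorem mul_sqrt_sq_add_sub_self_le (u : ℝ) {e : ℝ} (he : 0 ≤ e) :
    u * (√(u ^ 2 + 4 * e) - u) ≤ 2 * e := by
  have hsq : √(u ^ 2 + 4 * e) ^ 2 = u ^ 2 + 4 * e := Real.sq_sqrt (by positivity)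
  nlinarith [sq_nonneg (√(u ^ 2 + 4 * e) - u)]

theorem sub_le_of_sq_sub_sq_le {l h c : ℝ} (hh : 0 < h) (hhl : h ≤ l) (hc : l ^ 2 - h ^ 2 ≤ c) :
    l - h ≤ c / (2 * h) := by
  rw [le_div_iff₀ (by positivity)]
  nlinarith

theorem uu_pos {ε T : ℝ} (r : ℝ) (hε : ε < 1) (hεT : ε ≤ T) : 0 < uu ε T r := by
  unfold uu
  nlinarith [mul_nonneg (sub_nonneg.2 hεT) (sq_nonneg r)]

theorem lamE_eq (ε T r : ℝ) :
    lamE ε T r = (√ε)⁻¹ * √(1 + T * r ^ 2 + (√(uu ε T r ^ 2 + 4 * ε) - uu ε T r) / 2) := by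
  unfold lamE
  congr 2
  unfold uu
  ring

theorem Heps_pos {ε T : ℝ} (r : ℝ) (hε : 0 < ε) (hT : 0 ≤ T) : 0 < Heps ε T r :=
  mul_pos (inv_pos.2 (Real.sqrt_pos.2 hε)) (Real.sqrt_pos.2 (by positivity))

theorem Heps_le_lamE {ε : ℝ} (T r : ℝ) (hε : 0 ≤ ε) : Heps ε T r ≤ lamE ε T r := by
  rw [lamE_eq, Heps]
  refine mul_le_mul_of_nonneg_left (Real.sqrt_le_sqrt ?_) (by positivity)
  linarith [self_le_sqrt_sq_add (uu ε T r) (by positivity : 0 ≤ 4 * ε)]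

theorem lamE_sq_sub_Heps_sq {ε T : ℝ} (r : ℝ) (hε : 0 < ε) (hT : 0 ≤ T) :
    lamE ε T r ^ 2 - Heps ε T r ^ 2 = (√(uu ε T r ^ 2 + 4 * ε) - uu ε T r) / (2 * ε) := by
  have hv := self_le_sqrt_sq_add (uu ε T r) (by positivity : 0 ≤ 4 * ε)
  rw [lamE_eq, Heps, mul_pow, mul_pow, inv_pow, Real.sq_sqrt hε.le, Real.sq_sqrt (by positivity),
    Real.sq_sqrt (by nlinarith [sq_nonneg r])]
  field_simp
  ring

theorem stmt8_general (ε T : ℝ) (hε : 0 < ε) (hε' : ε ≤ 1 / 1000) (hT : 1 ≤ T)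
    (r : ℝ) :
    0 < uu ε T r ∧ Heps ε T r ≤ lamE ε T r ∧
      lamE ε T r - Heps ε T r ≤ 1 / (2 * uu ε T r * Heps ε T r) := by
  have hu : 0 < uu ε T r := uu_pos r (by linarith) (by linarith)
  have hH : 0 < Heps ε T r := Heps_pos r hε (by linarith)
  have hle := Heps_le_lamE T r hε.le
  refine ⟨hu, hle, ?_⟩
  have hsq : lamE ε T r ^ 2 - Heps ε T r ^ 2 ≤ 1 / uu ε T r := by
    rw [lamE_sq_sub_Heps_sq r hε (by linarith), div_le_div_iff₀ (by positivity) hu]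
    linarith [mul_sqrt_sq_add_sub_self_le (uu ε T r) hε.le]
  calc lamE ε T r - Heps ε T r ≤ 1 / uu ε T r / (2 * Heps ε T r) :=
        sub_le_of_sq_sub_sq_le hH hle hsq
    _ = 1 / (2 * uu ε T r * Heps ε T r) := by rw [div_div]; ring

/-- For every `r ≥ 0`: `u(r) > 0`, `H_ε(r) ≤ λ_e(r)`, and
`λ_e(r) − H_ε(r) ≤ 1/(2u(r)H_ε(r))`. -/
theorem stmt8 (ε T : ℝ) (hε : 0 < ε) (hε' : ε ≤ 1 / 1000) (hT : 1 ≤ T) (hT' : T ≤ 100)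
    (r : ℝ) (hr : 0 ≤ r) :
    0 < uu ε T r ∧ Heps ε T r ≤ lamE ε T r ∧
      lamE ε T r - Heps ε T r ≤ 1 / (2 * uu ε T r * Heps ε T r) :=
  stmt8_general ε T hε hε' hT r
end

section
/- For every r ≥ 0 one has the spectral-gap lower bound λ_e(r) − λ_i(r) ≥ √(1+r²) / (4·√(ε·(1+T))). -/
open Real

/- With `S = (1+ε)+(T+ε)r²` and `v = √(u² + 4ε)`, `√ε·λ_{e,i} = √((S ± v)/2)`. The product of the
radicands is `(S² - v²)/4 = ε((1+r²)(1+Tr²) - 1)`, so `ε(λ_e - λ_i)² = S - 2√(ε((1+r²)(1+Tr²) - 1))`.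
For `ε ≤ 1/1000` and `T ≤ 100` that square root is at most `(1+r²)/3`, which leaves at least
`(1+r²)/3 ≥ (1+r²)/(16(1+T))`. -/

theorem Real.sqrt_half_add_sub_sqrt_half_sub {S v : ℝ} (hv : 0 ≤ v) (hvS : v ≤ S) :
    √((S + v) / 2) - √((S - v) / 2) = √(S - √(S ^ 2 - v ^ 2)) := by
  have hprod : √((S + v) / 2) * √((S - v) / 2) * 2 = √(S ^ 2 - v ^ 2) := by
    rw [← Real.sqrt_mul (by linarith), ← Real.sqrt_sq zero_le_two, ← Real.sqrt_mul (by nlinarith)]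
    congr 1
    ring
  have hle : √((S - v) / 2) ≤ √((S + v) / 2) := Real.sqrt_le_sqrt (by linarith)
  rw [← Real.sqrt_sq (sub_nonneg.mpr hle), sub_sq, Real.sq_sqrt (by linarith),
    Real.sq_sqrt (by linarith), ← hprod]
  ring_nf

lemma sq_sub_uu_sq (ε T r : ℝ) :
    ((1 + ε) + (T + ε) * r ^ 2) ^ 2 - (uu ε T r ^ 2 + 4 * ε) =
      4 * ε * ((1 + r ^ 2) * (1 + T * r ^ 2) - 1) := by
  unfold uu
  ring

section Dispersion

variable {ε T : ℝ}

lemma lamE_sub_lamI (hε : 0 ≤ ε) (hT : 0 ≤ T) (r : ℝ) :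
    lamE ε T r - lamI ε T r =
      (√ε)⁻¹ * √((1 + ε) + (T + ε) * r ^ 2 - 2 * √(ε * ((1 + r ^ 2) * (1 + T * r ^ 2) - 1))) := by
  set S := (1 + ε) + (T + ε) * r ^ 2
  have hdisc : 0 ≤ uu ε T r ^ 2 + 4 * ε := by positivity
  have hvS : √(uu ε T r ^ 2 + 4 * ε) ≤ S := by
    refine Real.sqrt_le_iff.mpr ⟨by positivity, ?_⟩
    nlinarith [sq_sub_uu_sq ε T r, mul_nonneg hε (mul_nonneg hT (pow_nonneg (sq_nonneg r) 2)),
      mul_nonneg hε (mul_nonneg (add_nonneg zero_le_one hT) (sq_nonneg r))]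
  rw [lamE, lamI, ← mul_sub, Real.sqrt_half_add_sub_sqrt_half_sub (Real.sqrt_nonneg _) hvS,
    Real.sq_sqrt hdisc, sq_sub_uu_sq, mul_assoc, Real.sqrt_mul zero_le_four,
    show (4 : ℝ) = 2 ^ 2 by norm_num, Real.sqrt_sq zero_le_two]

lemma sqrt_eps_mul_sub_one_le (hε : 0 ≤ ε) (hε9 : 9 * ε ≤ 1) (hεT : 9 * (ε * T) ≤ 1) (r : ℝ) :
    √(ε * ((1 + r ^ 2) * (1 + T * r ^ 2) - 1)) ≤ (1 + r ^ 2) / 3 := by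
  have hsmall : 9 * ε * (1 + T * r ^ 2) ≤ 1 + r ^ 2 := by
    nlinarith [mul_le_mul_of_nonneg_right hεT (sq_nonneg r)]
  refine Real.sqrt_le_iff.mpr ⟨by positivity, ?_⟩
  nlinarith [mul_le_mul_of_nonneg_left hsmall (by positivity : (0 : ℝ) ≤ 1 + r ^ 2)]

end Dispersion

theorem stmt14_general (ε T : ℝ) (hε : 0 < ε) (hε' : ε ≤ 1 / 1000) (hT : 1 ≤ T) (hT' : T ≤ 100)
    (r : ℝ) :
    Real.sqrt (1 + r ^ 2) / (4 * Real.sqrt (ε * (1 + T))) ≤ lamE ε T r - lamI ε T r := by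
  have hεT : 9 * (ε * T) ≤ 1 := by nlinarith
  have hgap : (1 + r ^ 2) / 3 ≤
      (1 + ε) + (T + ε) * r ^ 2 - 2 * √(ε * ((1 + r ^ 2) * (1 + T * r ^ 2) - 1)) := by
    nlinarith [sqrt_eps_mul_sub_one_le hε.le (by linarith) hεT r, sq_nonneg r]
  have hsqrt : √(1 + r ^ 2) / (4 * √(1 + T)) ≤ √((1 + r ^ 2) / 3) := by
    rw [Real.sqrt_div' _ zero_le_three]
    refine div_le_div_of_nonneg_left (Real.sqrt_nonneg _) (by positivity) ?_
    calc √3 ≤ √16 := Real.sqrt_le_sqrt (by norm_num)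
      _ = 4 := by rw [show (16 : ℝ) = 4 ^ 2 by norm_num, Real.sqrt_sq zero_le_four]
      _ ≤ 4 * √(1 + T) := le_mul_of_one_le_right zero_le_four (Real.one_le_sqrt.mpr (by linarith))
  rw [lamE_sub_lamI hε.le (by linarith), Real.sqrt_mul hε.le]
  calc √(1 + r ^ 2) / (4 * (√ε * √(1 + T)))
      = (√ε)⁻¹ * (√(1 + r ^ 2) / (4 * √(1 + T))) := by ring
    _ ≤ _ := by
      gcongr
      exact hsqrt.trans (Real.sqrt_le_sqrt hgap)

/-- Spectral gap: `λ_e(r) − λ_i(r) ≥ √(1+r²)/(4√(ε(1+T)))` for every `r ≥ 0`. -/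
theorem stmt14 (ε T : ℝ) (hε : 0 < ε) (hε' : ε ≤ 1 / 1000) (hT : 1 ≤ T) (hT' : T ≤ 100)
    (r : ℝ) (hr : 0 ≤ r) :
    Real.sqrt (1 + r ^ 2) / (4 * Real.sqrt (ε * (1 + T))) ≤ lamE ε T r - lamI ε T r :=
  stmt14_general ε T hε hε' hT hT' r
end
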